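/- Every strong-inductive cubical set is consistent: if S is a strong-inductive cubical set in B_n, then for every face f of positive dimension, f belongs to S if and only if every face appearing in the boundary ∂f belongs to S. -/

import Mathlib

/-- A face of the `n`-dimensional cube: a function `Fin n → Fin 3`,
where `0` stands for `0`, `1` stands for `*`, and `2` stands for `1`. -/
abbrev Face (n : ℕ) := Fin n → Fin 3

/-- The dimension of a face: the number of indices mapped to `*` (encoded as `1 : Fin 3`). -/
def fdim {n : ℕ} (f : Face n) : ℕ := (Finset.univ.filter fun i => f i = 1).card

/-- `Adj f g` : the face `g` appears in the boundary `∂ f`, i.e. `g` is obtained from `f`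
by replacing a single occurrence of `*` by `0` or by `1`. -/
def Adj {n : ℕ} (f g : Face n) : Prop :=
  ∃ i, f i = 1 ∧ g i ≠ 1 ∧ ∀ j, j ≠ i → g j = f j

instance {n : ℕ} (f g : Face n) : Decidable (Adj f g) := by unfold Adj; infer_instance

/-- A cubical set is inductive if it is downward closed for the pointwise order
induced by `0 < * < 1`. -/
def Inductive {n : ℕ} (S : Finset (Face n)) : Prop :=
  ∀ f ∈ S, ∀ f' : Face n, (∀ i, f' i ≤ f i) → f' ∈ S

/-- Strong-inductive: inductive, and every maximal face has dimension `0`. -/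
def StrongInductive {n : ℕ} (S : Finset (Face n)) : Prop :=
  Inductive S ∧ ∀ f ∈ S, (∀ g ∈ S, (∀ i, f i ≤ g i) → g = f) → fdim f = 0

/-- A cubical set is consistent if for every face `f` of positive dimension, `f` belongs to
`S` if and only if every face appearing in the boundary `∂f` belongs to `S`. -/
def Consistent {n : ℕ} (S : Finset (Face n)) : Prop :=
  ∀ f : Face n, 0 < fdim f → (f ∈ S ↔ ∀ g, Adj f g → g ∈ S)

/-
A boundary face of `f` is either below `f` (a `*` replaced by `0`) or below every vertex above
`f` (a `*` replaced by `1`, which a vertex above `f` must also have there). In a strong-inductive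
set every face lies below a maximal face, which is a vertex, so the boundary of a face of the set
stays in the set. Conversely, replacing a `*` of `f` by `1` gives a boundary face above `f`.
-/

section

variable {n : ℕ}

lemma fdim_pos_iff {f : Face n} : 0 < fdim f ↔ ∃ i, f i = 1 := by
  simp [fdim, Finset.card_pos, Finset.filter_nonempty_iff]

lemma fdim_eq_zero_iff {f : Face n} : fdim f = 0 ↔ ∀ i, f i ≠ 1 := by
  simp [fdim, Finset.filter_eq_empty_iff]

lemma exists_adj_ge {f : Face n} (hf : 0 < fdim f) : ∃ g, Adj f g ∧ f ≤ g := by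
  obtain ⟨i, hi⟩ := fdim_pos_iff.mp hf
  refine ⟨Function.update f i 2, ⟨i, hi, by simp, fun j hj => Function.update_of_ne hj _ _⟩,
    fun j => ?_⟩
  rcases eq_or_ne j i with rfl | hj
  · simp [hi, Fin.le_def]
  · simp [Function.update_of_ne hj]

lemma Adj.le_of_le {f g h : Face n} (hfg : Adj f g) (hfh : f ≤ h) (hh : ∀ i, h i ≠ 1) :
    g ≤ h := by
  obtain ⟨i, hfi, -, hgf⟩ := hfg
  intro j
  rcases eq_or_ne j i with rfl | hj
  · -- `h j` is a vertex coordinate `≥ *`, hence the top value `1` (encoded `2`)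
    exact (by decide : ∀ a b : Fin 3, 1 ≤ b → b ≠ 1 → a ≤ b) _ _ (hfi ▸ hfh j) (hh j)
  · exact (hgf j hj).trans_le (hfh j)

lemma StrongInductive.exists_vertex_ge {S : Finset (Face n)} (hS : StrongInductive S)
    {f : Face n} (hf : f ∈ S) : ∃ h ∈ S, f ≤ h ∧ ∀ i, h i ≠ 1 := by
  obtain ⟨h, hfh, hmax⟩ := S.exists_le_maximal hf
  exact ⟨h, hmax.prop, hfh,
    fdim_eq_zero_iff.mp (hS.2 h hmax.prop fun g hg hhg => hmax.eq_of_ge hg hhg)⟩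

end

/-- Every strong-inductive cubical set is consistent. -/
theorem statement4 (n : ℕ) (S : Finset (Face n)) (hS : StrongInductive S) :
    Consistent S := by
  intro f hf
  constructor
  · intro hfS g hfg
    obtain ⟨h, hhS, hfh, hh⟩ := hS.exists_vertex_ge hfS
    exact hS.1 h hhS g (hfg.le_of_le hfh hh)
  · intro hbdry
    obtain ⟨g, hfg, hle⟩ := exists_adj_ge hf
    exact hS.1 g (hbdry g hfg) f hle
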